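/- arXiv:1605.01886 — 13 statements merged into one kernel-verified Lean document; each statement's English description precedes it below -/
import Mathlib

section
/- Let D be a partial order with a convergence relation → (assigning to certain subsets a designated 'natural' lub, where X → x implies x is the lub of X) satisfying the singleton axiom S3 (for all x, {x} → x). Then axioms S2 (if X ⊆ Y ⊆ |D|, X → x and Y ≤ x pointwise, then Y → x) and S4(1⇐) (for a non-empty two-parametric family y_{ij} with {y_{ij}}_j → d_i for each i, if {y_{ij}}_{i,j} → d then {d_i}_i → d) together are equivalent to axiom S6 (cofinality): if X → x and X ⊑ Y ⊑ x (where A ⊑ B means every element of A is below some element of B, and Y ⊑ x means every element of Y is below x), then Y → x. -/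
universe u

/-- In the presence of the singleton axiom S3, axioms S2 and S4(1⇐) together are
equivalent to axiom S6 (cofinality). -/
theorem stmt2 {α : Type u} [PartialOrder α] (conv : Set α → α → Prop)
    (hlub : ∀ (X : Set α) (x : α), conv X x → IsLUB X x)
    (hS3 : ∀ x : α, conv {x} x) :
    -- S2 ∧ S4(1⇐)
    ((∀ (X Y : Set α) (x : α), X ⊆ Y → conv X x → (∀ y ∈ Y, y ≤ x) → conv Y x) ∧
     (∀ (I J : Type u), Nonempty I → Nonempty J →
        ∀ (y : I → J → α) (d : I → α) (dd : α),
          (∀ i : I, conv (Set.range (y i)) (d i)) →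
          conv (Set.range fun p : I × J => y p.1 p.2) dd →
          conv (Set.range d) dd))
    ↔
    -- S6 (cofinality)
    (∀ (X Y : Set α) (x : α), conv X x →
      (∀ a ∈ X, ∃ b ∈ Y, a ≤ b) → (∀ y ∈ Y, y ≤ x) → conv Y x) := by
  constructor
  · rintro ⟨hS2, hS4⟩ X Y x hX hXY hYx
    rcases Set.eq_empty_or_nonempty Y with hY | hY
    · have hXe : X = ∅ := by
        ext a
        simp only [Set.mem_empty_iff_false, iff_false]
        intro ha
        rcases hXY a ha with ⟨b, hb, -⟩
        rw [hY] at hb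
        exact hb
      rw [hY]
      rw [hXe] at hX
      exact hX
    · haveI : Nonempty Y := hY.to_subtype
      classical
      set y : Y → (X ⊕ PUnit.{u+1}) → α := fun b j =>
        match j with
        | Sum.inl a => if (a : α) ≤ (b : α) then (a : α) else (b : α)
        | Sum.inr _ => (b : α) with hy
      have h1 : ∀ b : Y, conv (Set.range (y b)) (b : α) := by
        intro b
        apply hS2 {(b : α)} _ _ _ (hS3 b)
        · rintro z ⟨j, rfl⟩
          rcases j with a | u
          · by_cases h : (a : α) ≤ (b : α)
            · simp [hy, h]
            · simp [hy, h]
          · simp [hy]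
        · rintro z rfl
          exact ⟨Sum.inr PUnit.unit, rfl⟩
      have h2 : conv (Set.range fun p : Y × (X ⊕ PUnit.{u+1}) => y p.1 p.2) x := by
        apply hS2 X _ _ _ hX
        · rintro z ⟨⟨b, j⟩, rfl⟩
          rcases j with a | u
          · by_cases h : (a : α) ≤ (b : α)
            · simp only [hy, h, if_pos]
              exact (hlub X x hX).1 a.2
            · simp only [hy, h, if_neg, not_false_iff]
              exact hYx b b.2
          · exact hYx b b.2
        · intro a ha
          rcases hXY a ha with ⟨b, hb, hab⟩
          exact ⟨(⟨b, hb⟩, Sum.inl ⟨a, ha⟩), by simp [hy, hab]⟩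
      have := hS4 Y (X ⊕ PUnit.{u+1}) ‹Nonempty Y› ⟨Sum.inr PUnit.unit⟩ y
        (fun b => (b : α)) x h1 h2
      rwa [Subtype.range_coe] at this
  · intro hS6
    constructor
    · intro X Y x hXY hX hYx
      exact hS6 X Y x hX (fun a ha => ⟨a, hXY ha, le_refl a⟩) hYx
    · intro I J hI hJ y d dd hconv hdd
      apply hS6 _ _ _ hdd
      · rintro a ⟨⟨i, j⟩, rfl⟩
        exact ⟨d i, ⟨i, rfl⟩, (hlub _ _ (hconv i)).1 ⟨j, rfl⟩⟩
      · rintro z ⟨i, rfl⟩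
        exact (hlub _ _ (hconv i)).2 fun a ⟨j, hj⟩ => (hlub _ _ hdd).1 ⟨(i, j), hj⟩
end

section
/- Let D be a partial order with a convergence relation → satisfying X → x implies x = lub X. Then axioms S2 (if X ⊆ Y, X → x and Y ≤ x, then Y → x) and S5 (if X ⊆ Y, Y → y and Y ⊑ X, then X → y) together are equivalent to axiom S6 (cofinality): if X → x and X ⊑ Y ⊑ x, then Y → x. -/
universe u

/-- Axioms S2 and S5 together are equivalent to axiom S6 (cofinality). -/
theorem stmt3 {α : Type u} [PartialOrder α] (conv : Set α → α → Prop)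
    (hlub : ∀ (X : Set α) (x : α), conv X x → IsLUB X x) :
    -- S2 ∧ S5
    ((∀ (X Y : Set α) (x : α), X ⊆ Y → conv X x → (∀ y ∈ Y, y ≤ x) → conv Y x) ∧
     (∀ (X Y : Set α) (y : α), X ⊆ Y → conv Y y → (∀ b ∈ Y, ∃ a ∈ X, b ≤ a) → conv X y))
    ↔
    -- S6 (cofinality)
    (∀ (X Y : Set α) (x : α), conv X x →
      (∀ a ∈ X, ∃ b ∈ Y, a ≤ b) → (∀ y ∈ Y, y ≤ x) → conv Y x) := by
  constructor
  · rintro ⟨S2, S5⟩ X Y x hX hcof hbd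
    have hXx : ∀ a ∈ X, a ≤ x := fun a ha => (hlub X x hX).1 ha
    have hU : conv (X ∪ Y) x := by
      apply S2 X (X ∪ Y) x Set.subset_union_left hX
      rintro y (hy | hy)
      · exact hXx y hy
      · exact hbd y hy
    apply S5 Y (X ∪ Y) x Set.subset_union_right hU
    rintro b (hb | hb)
    · exact hcof b hb
    · exact ⟨b, hb, le_refl b⟩
  · intro S6
    constructor
    · intro X Y x hXY hX hbd
      exact S6 X Y x hX (fun a ha => ⟨a, hXY ha, le_refl a⟩) hbd
    · intro X Y y hXY hY hcof
      exact S6 Y X y hY hcof (fun a ha => (hlub Y y hY).1 (hXY ha))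
end

section
/- Let D be a partial order with a convergence relation → satisfying X → x implies x = lub X, and suppose axioms S3 (singleton: {x} → x for all x) and S6 (cofinality: X → x and X ⊑ Y ⊑ x implies Y → x) hold. Then axiom S4(1⇒) (for a non-empty two-parametric family y_{ij} with {y_{ij}}_j → d_i for each i, {d_i}_i → d implies {y_{ij}}_{i,j} → d) is equivalent to axiom S7 (transitivity): if 𝒳 ⊆ P(|D|) with X → d_X for all X ∈ 𝒳, then {d_X : X ∈ 𝒳} → d implies ⋃𝒳 → d. -/
universe u

/-- In the presence of axioms S3 (singleton) and S6 (cofinality), axiom S4(1⇒)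
is equivalent to axiom S7 (transitivity). -/
theorem stmt4 {α : Type u} [PartialOrder α] (conv : Set α → α → Prop)
    (hlub : ∀ (X : Set α) (x : α), conv X x → IsLUB X x)
    (hS3 : ∀ x : α, conv {x} x)
    (hS6 : ∀ (X Y : Set α) (x : α), conv X x →
      (∀ a ∈ X, ∃ b ∈ Y, a ≤ b) → (∀ y ∈ Y, y ≤ x) → conv Y x) :
    -- S4(1⇒)
    (∀ (I J : Type u), Nonempty I → Nonempty J →
        ∀ (y : I → J → α) (d : I → α) (dd : α),
          (∀ i : I, conv (Set.range (y i)) (d i)) →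
          conv (Set.range d) dd →
          conv (Set.range fun p : I × J => y p.1 p.2) dd)
    ↔
    -- S7 (transitivity)
    (∀ (𝒳 : Set (Set α)) (dX : Set α → α) (d : α),
        (∀ X ∈ 𝒳, conv X (dX X)) →
        conv (dX '' 𝒳) d → conv (⋃₀ 𝒳) d) := by
  classical
  constructor
  · intro hS4 𝒳 dX d hconvX hconvd
    by_cases hne : ∃ X ∈ 𝒳, X.Nonempty
    · obtain ⟨X₀, hX₀, hX₀ne⟩ := hne
      set 𝒳' : Set (Set α) := {X ∈ 𝒳 | X.Nonempty} with h𝒳'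
      haveI hI : Nonempty ↥𝒳' := ⟨⟨X₀, hX₀, hX₀ne⟩⟩
      haveI hJ : Nonempty α := ⟨hX₀ne.choose⟩
      have pick : ∀ i : ↥𝒳', ∃ a, a ∈ i.1 := fun i => i.2.2
      let y : ↥𝒳' → α → α := fun i j => if j ∈ i.1 then j else (pick i).choose
      let dd : ↥𝒳' → α := fun i => dX i.1
      have hrange : ∀ i, Set.range (y i) = i.1 := by
        intro i
        ext a
        constructor
        · rintro ⟨j, rfl⟩
          by_cases h : j ∈ i.1
          · simp [y, h]
          · simpa [y, h] using (pick i).choose_spec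
        · intro ha
          exact ⟨a, by simp [y, ha]⟩
      have h1 : ∀ i, conv (Set.range (y i)) (dd i) := by
        intro i; rw [hrange]; exact hconvX i.1 i.2.1
      have h2 : conv (Set.range dd) d := by
        have hsub : Set.range dd = dX '' 𝒳' := by
          ext a
          constructor
          · rintro ⟨i, rfl⟩; exact ⟨i.1, i.2, rfl⟩
          · rintro ⟨X, hX, rfl⟩; exact ⟨⟨X, hX⟩, rfl⟩
        rw [hsub]
        apply hS6 (dX '' 𝒳) _ d hconvd
        · rintro a ⟨X, hX, rfl⟩
          by_cases hXne : X.Nonempty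
          · exact ⟨dX X, ⟨X, ⟨hX, hXne⟩, rfl⟩, le_rfl⟩
          · have hXe : X = ∅ := Set.not_nonempty_iff_eq_empty.mp hXne
            refine ⟨dX X₀, ⟨X₀, ⟨hX₀, hX₀ne⟩, rfl⟩, ?_⟩
            subst hXe
            have hl := hlub _ _ (hconvX _ hX)
            exact hl.2 (by simp [upperBounds])
        · rintro a ⟨X, hX, rfl⟩
          exact (hlub _ _ hconvd).1 ⟨X, hX.1, rfl⟩
      have hmain := hS4 ↥𝒳' α hI hJ y dd d h1 h2
      have heq : (Set.range fun p : ↥𝒳' × α => y p.1 p.2) = ⋃₀ 𝒳 := by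
        ext a
        constructor
        · rintro ⟨⟨i, j⟩, rfl⟩
          have hm : y i j ∈ (i : Set α) := by rw [← hrange i]; exact ⟨j, rfl⟩
          exact ⟨i.1, i.2.1, hm⟩
        · rintro ⟨X, hX, haX⟩
          refine ⟨⟨⟨X, hX, ⟨a, haX⟩⟩, a⟩, ?_⟩
          simp [y, haX]
      rwa [heq] at hmain
    · push_neg at hne
      have hsU : ⋃₀ 𝒳 = ∅ := by
        ext a
        simp only [Set.mem_sUnion, Set.mem_empty_iff_false, iff_false, not_exists]
        rintro X ⟨hX, ha⟩
        rw [hne X hX] at ha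
        exact ha
      rw [hsU]
      by_cases hemp : ∅ ∈ 𝒳
      · have hd : dX '' 𝒳 = {dX ∅} := by
          ext a
          constructor
          · rintro ⟨X, hX, rfl⟩
            simp [hne X hX]
          · rintro rfl
            exact ⟨∅, hemp, rfl⟩
        rw [hd] at hconvd
        have hde : d = dX ∅ := (hlub _ _ hconvd).unique isLUB_singleton
        rw [hde]
        exact hconvX ∅ hemp
      · have h𝒳e : 𝒳 = ∅ := by
          ext X
          simp only [Set.mem_empty_iff_false, iff_false]
          intro hX
          exact hemp (hne X hX ▸ hX)
        subst h𝒳e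
        simpa using hconvd
  · intro hS7 I J hI hJ y d dd h1 h2
    haveI := hI; haveI := hJ
    let 𝒳 : Set (Set α) := Set.range (fun i => Set.range (y i))
    let dX : Set α → α := fun X => if h : ∃ i, Set.range (y i) = X then d h.choose else dd
    have hdX : ∀ i, dX (Set.range (y i)) = d i := by
      intro i
      have h : ∃ i', Set.range (y i') = Set.range (y i) := ⟨i, rfl⟩
      simp only [dX, dif_pos h]
      have hl1 := hlub _ _ (h1 h.choose)
      rw [h.choose_spec] at hl1
      exact hl1.unique (hlub _ _ (h1 i))
    have hX : ∀ X ∈ 𝒳, conv X (dX X) := by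
      rintro X ⟨i, rfl⟩
      rw [hdX]
      exact h1 i
    have himg : dX '' 𝒳 = Set.range d := by
      ext a
      constructor
      · rintro ⟨X, ⟨i, rfl⟩, rfl⟩
        exact ⟨i, (hdX i).symm⟩
      · rintro ⟨i, rfl⟩
        exact ⟨Set.range (y i), ⟨i, rfl⟩, hdX i⟩
    have hU : ⋃₀ 𝒳 = Set.range fun p : I × J => y p.1 p.2 := by
      ext a
      constructor
      · rintro ⟨X, ⟨i, rfl⟩, j, rfl⟩
        exact ⟨⟨i, j⟩, rfl⟩
      · rintro ⟨⟨i, j⟩, rfl⟩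
        exact ⟨Set.range (y i), ⟨i, rfl⟩, j, rfl⟩
    have := hS7 𝒳 dX dd hX (himg ▸ h2)
    rwa [hU] at this
end

section
/- Let D be a partial order with a convergence relation → satisfying X → x implies x = lub X, and suppose the singleton axiom S3 holds. Define A ⊴ B ('A under B') iff for all a ∈ A, either there is b ∈ B with a ≤ b, or there is B' ⊆ B with B' → a. Then axioms S6 (cofinality) and S7 (transitivity) together are equivalent to axiom S8 (under): if A → a and A ⊴ B ⊑ a, then B → a. -/
universe u

/-- `Under conv A B` (`A ⊴ B`): every element of `A` is below some element of `B`,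
or is a natural lub of some subset of `B`. -/
def Under {α : Type u} [PartialOrder α] (conv : Set α → α → Prop) (A B : Set α) : Prop :=
  ∀ a ∈ A, (∃ b ∈ B, a ≤ b) ∨ ∃ B' ⊆ B, conv B' a

/-- In the presence of axiom S3 (singleton), axioms S6 (cofinality) and S7
(transitivity) together are equivalent to axiom S8 (under). -/
theorem stmt5 {α : Type u} [PartialOrder α] (conv : Set α → α → Prop)
    (hlub : ∀ (X : Set α) (x : α), conv X x → IsLUB X x)
    (hS3 : ∀ x : α, conv {x} x) :
    -- S6 ∧ S7
    ((∀ (X Y : Set α) (x : α), conv X x →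
        (∀ a ∈ X, ∃ b ∈ Y, a ≤ b) → (∀ y ∈ Y, y ≤ x) → conv Y x) ∧
     (∀ (𝒳 : Set (Set α)) (dX : Set α → α) (d : α),
        (∀ X ∈ 𝒳, conv X (dX X)) →
        conv (dX '' 𝒳) d → conv (⋃₀ 𝒳) d))
    ↔
    -- S8 (under)
    (∀ (A B : Set α) (a : α), conv A a → Under conv A B → (∀ b ∈ B, b ≤ a) →
        conv B a) := by
  constructor
  · rintro ⟨hS6, hS7⟩ A B a hA hAB hBa
    haveI : Nonempty α := ⟨a⟩
    set dX : Set α → α := fun X => Classical.epsilon (conv X) with hdXdef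
    set 𝒳 : Set (Set α) := {X | X ⊆ B ∧ ∃ d, conv X d ∧ d ≤ a ∧ ∃ x ∈ A, x ≤ d} with h𝒳
    have hdXeq : ∀ X d, conv X d → dX X = d := fun X d hd =>
      (hlub X _ (Classical.epsilon_spec ⟨d, hd⟩)).unique (hlub X d hd)
    have hconv : ∀ X ∈ 𝒳, conv X (dX X) := by
      rintro X ⟨-, d, hd, -⟩
      exact Classical.epsilon_spec ⟨d, hd⟩
    have hDa : conv (dX '' 𝒳) a := by
      apply hS6 A _ a hA
      · intro x hx
        rcases hAB x hx with ⟨b, hbB, hxb⟩ | ⟨B', hB'B, hB'⟩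
        · refine ⟨b, ⟨{b}, ⟨?_, b, hS3 b, hBa b hbB, x, hx, hxb⟩, hdXeq _ _ (hS3 b)⟩, hxb⟩
          simpa using hbB
        · have hxa : x ≤ a := (hlub A a hA).1 hx
          exact ⟨x, ⟨B', ⟨hB'B, x, hB', hxa, x, hx, le_rfl⟩, hdXeq _ _ hB'⟩, le_rfl⟩
      · rintro y ⟨X, ⟨-, d, hd, hda, -⟩, rfl⟩
        rw [hdXeq X d hd]; exact hda
    have hU : conv (⋃₀ 𝒳) a := hS7 𝒳 dX a hconv hDa
    refine hS6 (⋃₀ 𝒳) B a hU ?_ hBa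
    rintro u ⟨X, hX𝒳, huX⟩
    exact ⟨u, hX𝒳.1 huX, le_rfl⟩
  · intro hS8
    constructor
    · intro X Y x hX hXY hYx
      exact hS8 X Y x hX (fun a ha => Or.inl (hXY a ha)) hYx
    · intro 𝒳 dX d hconv hD
      refine hS8 (dX '' 𝒳) (⋃₀ 𝒳) d hD ?_ ?_
      · rintro y ⟨X, hX, rfl⟩
        exact Or.inr ⟨X, fun u hu => ⟨X, hX, hu⟩, hconv X hX⟩
      · rintro y ⟨X, hX, hyX⟩
        exact le_trans ((hlub X _ (hconv X hX)).1 hyX) ((hlub _ d hD).1 ⟨X, hX, rfl⟩)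
end

section
/- In the category Dlubpo of directed-lub partial orders and continuous functions, if E fulfills axiom S5 for directed sets (if X ⊆ Y ⊆ |E| with X, Y directed, Y → y and Y ⊑ X, then X → y), then the general function dlubpo D ⇒* E also fulfills axiom S5. -/
universe u

/-- A set is directed: non-empty and upward directed. -/
def Dir {α : Type u} [Preorder α] (A : Set α) : Prop :=
  A.Nonempty ∧ DirectedOn (· ≤ ·) A

/-- Continuity of a function between dlubpos: monotone and preserving natural lubs. -/
def IsCont {α β : Type u} [PartialOrder α] [PartialOrder β]
    (convD : Set α → α → Prop) (convE : Set β → β → Prop) (f : α → β) : Prop :=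
  Monotone f ∧ ∀ (A : Set α) (a : α), convD A a → convE (f '' A) (f a)

/-- The natural convergence of the general function dlubpo `D ⇒* E`:
`F → f` iff `F` is directed and for every directed `A ⊆ |D ⇒* E| × |D|`
(componentwise order) with `π₁[A] = F` and `π₂[A] → d`, one has
`eval[A] → f d` in `E`. -/
def ConvStar {α β : Type u} [PartialOrder α] [PartialOrder β]
    (convD : Set α → α → Prop) (convE : Set β → β → Prop)
    (F : Set {f : α → β // IsCont convD convE f})
    (f : {f : α → β // IsCont convD convE f}) : Prop :=
  Dir F ∧
  ∀ A : Set ({f : α → β // IsCont convD convE f} × α),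
    Dir A → Prod.fst '' A = F →
    ∀ d : α, convD (Prod.snd '' A) d →
      convE ((fun p => p.1.1 p.2) '' A) (f.1 d)

/-!
Given a directed `A` with `π₁[A] = F` and `π₂[A] → d`, pass to the box `B = G × π₂[A]`: it is
directed with `π₁[B] = G` and `π₂[B] = π₂[A]`, so `eval[B] → g d`. Clearly `A ⊆ B`, and each
`(h, x) ∈ B` lies below some element of `A`, because `h` is below some `f ∈ π₁[A]` and `A` is
directed. Evaluation is monotone, so `eval[B] ⊑ eval[A]`, and S5 in `E` gives `eval[A] → g d`.
-/

/-- Axiom S5 for directed sets: convergence passes to cofinal directed subsets. -/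
def AxiomS5 {β : Type u} [Preorder β] (conv : Set β → β → Prop) : Prop :=
  ∀ (X Y : Set β) (y : β), X ⊆ Y → Dir X → Dir Y → conv Y y →
    (∀ b ∈ Y, ∃ a ∈ X, b ≤ a) → conv X y

section Dir

variable {P Q : Type u} [Preorder P] [Preorder Q]

theorem Dir.image {A : Set P} (hA : Dir A) {f : P → Q} (hf : Monotone f) : Dir (f '' A) :=
  ⟨hA.1.image f, hA.2.mono_comp hf⟩

theorem Dir.prod {A : Set P} {B : Set Q} (hA : Dir A) (hB : Dir B) : Dir (A ×ˢ B) :=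
  ⟨hA.1.prod hB.1, hA.2.prod hB.2⟩

end Dir

theorem DirectedOn.exists_ge_of_mem_prod_snd_image {P Q : Type*} [Preorder P] [Preorder Q]
    {A : Set (P × Q)} (hA : DirectedOn (· ≤ ·) A) {G : Set P}
    (hG : ∀ b ∈ G, ∃ a ∈ Prod.fst '' A, b ≤ a) :
    ∀ p ∈ G ×ˢ (Prod.snd '' A), ∃ r ∈ A, p ≤ r := by
  rintro ⟨h, x⟩ ⟨hh, q, hq, rfl⟩
  obtain ⟨_, ⟨p, hp, rfl⟩, hhp⟩ := hG h hh
  obtain ⟨r, hr, hpr, hqr⟩ := hA p hp q hq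
  exact ⟨r, hr, hhp.trans hpr.1, hqr.2⟩

section Eval

variable {α β : Type u} [PartialOrder α] [PartialOrder β]
  {convD : Set α → α → Prop} {convE : Set β → β → Prop}

theorem monotone_eval :
    Monotone fun p : {f : α → β // IsCont convD convE f} × α => p.1.1 p.2 :=
  fun p q hpq => (hpq.1 p.2).trans (q.1.2.1 hpq.2)

theorem axiomS5_convStar (hS5E : AxiomS5 convE) : AxiomS5 (ConvStar convD convE) := by
  intro F G g hFG hF hG ⟨_, hconvG⟩ hGF
  refine ⟨hF, fun A hA hfst d hd => ?_⟩
  set B := G ×ˢ (Prod.snd '' A)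
  have hB : Dir B := hG.prod (hA.image monotone_snd)
  have hconvB : convE ((fun p => p.1.1 p.2) '' B) (g.1 d) :=
    hconvG B hB (Set.fst_image_prod G (hA.1.image _)) d (by rwa [Set.snd_image_prod hG.1])
  have hAB : A ⊆ B := fun p hp =>
    ⟨hFG (hfst ▸ Set.mem_image_of_mem _ hp), Set.mem_image_of_mem _ hp⟩
  have hBA : ∀ p ∈ B, ∃ r ∈ A, p ≤ r := hA.2.exists_ge_of_mem_prod_snd_image (hfst ▸ hGF)
  refine hS5E _ _ _ (Set.image_mono hAB) (hA.image monotone_eval) (hB.image monotone_eval)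
    hconvB ?_
  rintro _ ⟨p, hp, rfl⟩
  obtain ⟨r, hr, hpr⟩ := hBA p hp
  exact ⟨_, Set.mem_image_of_mem _ hr, monotone_eval hpr⟩

end Eval

theorem stmt6_general {α β : Type u} [PartialOrder α] [PartialOrder β]
    (convD : Set α → α → Prop) (convE : Set β → β → Prop)
    (hS5E : ∀ (X Y : Set β) (y : β), X ⊆ Y → Dir X → Dir Y → convE Y y →
      (∀ b ∈ Y, ∃ a ∈ X, b ≤ a) → convE X y) :
    ∀ (F G : Set {f : α → β // IsCont convD convE f})
      (g : {f : α → β // IsCont convD convE f}),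
      F ⊆ G → Dir F → Dir G → ConvStar convD convE G g →
      (∀ b ∈ G, ∃ a ∈ F, b ≤ a) → ConvStar convD convE F g := axiomS5_convStar hS5E

/-- If `E` fulfills axiom S5 for directed sets, then the general function dlubpo
`D ⇒* E` also fulfills axiom S5. -/
theorem stmt6 {α β : Type u} [PartialOrder α] [PartialOrder β]
    (convD : Set α → α → Prop) (convE : Set β → β → Prop)
    (hDdl : ∀ (A : Set α) (a : α), convD A a → Dir A ∧ IsLUB A a)
    (hDsing : ∀ a : α, convD {a} a)
    (hEdl : ∀ (A : Set β) (a : β), convE A a → Dir A ∧ IsLUB A a)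
    (hEsing : ∀ a : β, convE {a} a)
    (hS5E : ∀ (X Y : Set β) (y : β), X ⊆ Y → Dir X → Dir Y → convE Y y →
      (∀ b ∈ Y, ∃ a ∈ X, b ≤ a) → convE X y) :
    ∀ (F G : Set {f : α → β // IsCont convD convE f})
      (g : {f : α → β // IsCont convD convE f}),
      F ⊆ G → Dir F → Dir G → ConvStar convD convE G g →
      (∀ b ∈ G, ∃ a ∈ F, b ≤ a) → ConvStar convD convE F g :=
  stmt6_general convD convE hS5E
end

section
/- Let C, D, E be dlubpos and suppose E fulfills axiom S5 for directed sets. Then for every continuous f : C × D → E, the curried function curry(f) : C → (D ⇒* E), defined by curry(f)(c) = λd. f(c,d), is continuous. -/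
universe u

/-- The product convergence on `C × D`: a directed set converges iff both
projections converge. -/
def ConvProd {γ α : Type u} [PartialOrder γ] [PartialOrder α]
    (convC : Set γ → γ → Prop) (convD : Set α → α → Prop)
    (A : Set (γ × α)) (p : γ × α) : Prop :=
  Dir A ∧ convC (Prod.fst '' A) p.1 ∧ convD (Prod.snd '' A) p.2

/-- If `E` fulfills axiom S5 for directed sets, then for every continuous
`f : C × D → E` the curried function `curry f : C → (D ⇒* E)`,
`curry f c = λ d, f (c, d)`, is continuous. -/
theorem stmt7 {γ α β : Type u} [PartialOrder γ] [PartialOrder α] [PartialOrder β]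
    (convC : Set γ → γ → Prop) (convD : Set α → α → Prop) (convE : Set β → β → Prop)
    (hCdl : ∀ (A : Set γ) (a : γ), convC A a → Dir A ∧ IsLUB A a)
    (hCsing : ∀ a : γ, convC {a} a)
    (hDdl : ∀ (A : Set α) (a : α), convD A a → Dir A ∧ IsLUB A a)
    (hDsing : ∀ a : α, convD {a} a)
    (hEdl : ∀ (A : Set β) (a : β), convE A a → Dir A ∧ IsLUB A a)
    (hEsing : ∀ a : β, convE {a} a)
    (hS5E : ∀ (X Y : Set β) (y : β), X ⊆ Y → Dir X → Dir Y → convE Y y →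
      (∀ b ∈ Y, ∃ a ∈ X, b ≤ a) → convE X y)
    (f : γ × α → β)
    (hf : IsCont (ConvProd convC convD) convE f) :
    ∃ hc : ∀ c : γ, IsCont convD convE (fun d => f (c, d)),
      IsCont convC (ConvStar convD convE)
        (fun c => (⟨fun d => f (c, d), hc c⟩ : {g : α → β // IsCont convD convE g})) := by
  have hc : ∀ c : γ, IsCont convD convE (fun d => f (c, d)) := by
    intro c
    constructor
    · intro d1 d2 h
      exact hf.1 (Prod.mk_le_mk.mpr ⟨le_refl c, h⟩)
    · intro A a hA
      obtain ⟨⟨⟨x0, hx0⟩, hdirA⟩, _⟩ := hDdl A a hA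
      have hB : ConvProd convC convD (Prod.mk c '' A) (c, a) := by
        refine ⟨⟨⟨(c, x0), ⟨x0, hx0, rfl⟩⟩, ?_⟩, ?_, ?_⟩
        · rintro _ ⟨x, hx, rfl⟩ _ ⟨y, hy, rfl⟩
          obtain ⟨z, hz, hxz, hyz⟩ := hdirA x hx y hy
          exact ⟨(c, z), ⟨z, hz, rfl⟩, ⟨le_refl c, hxz⟩, ⟨le_refl c, hyz⟩⟩
        · have h1 : Prod.fst '' (Prod.mk c '' A) = {c} := by
            ext y
            constructor
            · rintro ⟨_, ⟨x, _, rfl⟩, rfl⟩; rfl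
            · rintro rfl; exact ⟨(_, x0), ⟨x0, hx0, rfl⟩, rfl⟩
          rw [h1]; exact hCsing c
        · have h2 : Prod.snd '' (Prod.mk c '' A) = A := by
            ext y
            constructor
            · rintro ⟨_, ⟨x, hx, rfl⟩, rfl⟩; exact hx
            · intro hy; exact ⟨(c, y), ⟨y, hy, rfl⟩, rfl⟩
          rw [h2]; exact hA
      have hconv := hf.2 _ _ hB
      have heq : f '' (Prod.mk c '' A) = (fun d => f (c, d)) '' A := by
        rw [Set.image_image]
      rwa [heq] at hconv
  have hmono : ∀ c1 c2 : γ, c1 ≤ c2 →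
      (⟨fun d => f (c1, d), hc c1⟩ : {g : α → β // IsCont convD convE g}) ≤
        ⟨fun d => f (c2, d), hc c2⟩ := by
    intro c1 c2 h
    exact fun d => hf.1 (Prod.mk_le_mk.mpr ⟨h, le_refl d⟩)
  refine ⟨hc, fun c1 c2 h => hmono c1 c2 h, ?_⟩
  intro F c hF
  obtain ⟨⟨⟨c0, hc0⟩, hFdir⟩, hFlub⟩ := hCdl F c hF
  constructor
  · refine ⟨⟨_, ⟨c0, hc0, rfl⟩⟩, ?_⟩
    rintro _ ⟨x, hx, rfl⟩ _ ⟨y, hy, rfl⟩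
    obtain ⟨z, hz, hxz, hyz⟩ := hFdir x hx y hy
    exact ⟨_, ⟨z, hz, rfl⟩, hmono x z hxz, hmono y z hyz⟩
  · intro A hA hAF d hd
    -- B = F ×ˢ (snd '' A)
    set S : Set α := Prod.snd '' A with hS
    have hSne : S.Nonempty := hA.1.image _
    have hSdir : DirectedOn (· ≤ ·) S := by
      rintro _ ⟨x, hx, rfl⟩ _ ⟨y, hy, rfl⟩
      obtain ⟨z, hz, hxz, hyz⟩ := hA.2 x hx y hy
      exact ⟨z.2, ⟨z, hz, rfl⟩, hxz.2, hyz.2⟩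
    have hBdir : Dir (F ×ˢ S) := by
      refine ⟨⟨(c0, hSne.choose), ⟨hc0, hSne.choose_spec⟩⟩, ?_⟩
      rintro ⟨x1, x2⟩ ⟨hx1, hx2⟩ ⟨y1, y2⟩ ⟨hy1, hy2⟩
      obtain ⟨z1, hz1, hxz1, hyz1⟩ := hFdir x1 hx1 y1 hy1
      obtain ⟨z2, hz2, hxz2, hyz2⟩ := hSdir x2 hx2 y2 hy2
      exact ⟨(z1, z2), ⟨hz1, hz2⟩, ⟨hxz1, hxz2⟩, ⟨hyz1, hyz2⟩⟩
    have hBfst : Prod.fst '' (F ×ˢ S) = F := Set.fst_image_prod F hSne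
    have hBsnd : Prod.snd '' (F ×ˢ S) = S := Set.snd_image_prod ⟨c0, hc0⟩ S
    have hBconv : ConvProd convC convD (F ×ˢ S) (c, d) := by
      refine ⟨hBdir, ?_, ?_⟩
      · rw [hBfst]; exact hF
      · rw [hBsnd]; exact hd
    have hY : convE (f '' (F ×ˢ S)) (f (c, d)) := hf.2 _ _ hBconv
    -- extract representation: each g ∈ fst '' A is curry of some c' ∈ F
    have hrep : ∀ p ∈ A, ∃ c' ∈ F, p.1 =
        (⟨fun d => f (c', d), hc c'⟩ : {g : α → β // IsCont convD convE g}) := by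
      intro p hp
      have : p.1 ∈ Prod.fst '' A := ⟨p, hp, rfl⟩
      rw [hAF] at this
      obtain ⟨c', hc', he⟩ := this
      exact ⟨c', hc', he.symm⟩
    have hsub : ((fun p => p.1.1 p.2) '' A) ⊆ f '' (F ×ˢ S) := by
      rintro _ ⟨p, hp, rfl⟩
      obtain ⟨c', hc', he⟩ := hrep p hp
      refine ⟨(c', p.2), ⟨hc', ⟨p, hp, rfl⟩⟩, ?_⟩
      show f (c', p.2) = p.1.1 p.2
      rw [he]
    have hXdir : Dir ((fun p => p.1.1 p.2) '' A) := by
      refine ⟨hA.1.image _, ?_⟩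
      rintro _ ⟨x, hx, rfl⟩ _ ⟨y, hy, rfl⟩
      obtain ⟨z, hz, hxz, hyz⟩ := hA.2 x hx y hy
      refine ⟨z.1.1 z.2, ⟨z, hz, rfl⟩, ?_, ?_⟩
      · exact le_trans (hxz.1 x.2) (z.1.2.1 hxz.2)
      · exact le_trans (hyz.1 y.2) (z.1.2.1 hyz.2)
    have hYdir : Dir (f '' (F ×ˢ S)) := (hEdl _ _ hY).1
    have hcof : ∀ b ∈ f '' (F ×ˢ S), ∃ a ∈ (fun p => p.1.1 p.2) '' A, b ≤ a := by
      rintro _ ⟨⟨c', d'⟩, ⟨hc', hd'⟩, rfl⟩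
      -- c' ∈ F so curry c' ∈ fst '' A
      have : (⟨fun d => f (c', d), hc c'⟩ : {g : α → β // IsCont convD convE g})
          ∈ Prod.fst '' A := by rw [hAF]; exact ⟨c', hc', rfl⟩
      obtain ⟨p, hp, hpe⟩ := this
      obtain ⟨q, hq, hqd⟩ := hd'
      obtain ⟨r, hr, hpr, hqr⟩ := hA.2 p hp q hq
      refine ⟨r.1.1 r.2, ⟨r, hr, rfl⟩, ?_⟩
      calc f (c', d') = p.1.1 d' := by rw [hpe]
        _ ≤ p.1.1 r.2 := p.1.2.1 (le_of_eq_of_le (show d' = q.2 from hqd.symm) hqr.2)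
        _ ≤ r.1.1 r.2 := hpr.1 r.2
    exact hS5E _ _ _ hsub hXdir hYdir hY hcof
end

section
/- Let D be a lub partial order (lubpo): a partial order with a convergence relation → on subsets where A → a implies a = lub A. Define the cl-rule system on |D| with rules {a} ↝ b for b ≤ a, and A ↝ a for A → a; let cl_D be its closure operator. Let D̂ be the set of cl_D-closed subsets of |D|, ordered by inclusion. Then (D̂, ⊆) is a complete lattice with lub of a family given by cl_D of the union, and the map in_D : |D| → D̂, in_D(d) = {x : x ≤ d}, is an order embedding that maps natural lubs in D to lubs in D̂: if A → a then in_D(a) = lub of {in_D(x) : x ∈ A} in D̂, and this lub equals cl_D(A). -/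
universe u

/-- The closure operator of the cl-rule system of a lubpo: `Cl conv A` is the
least superset of `A` closed downwards from its elements and closed under
taking natural lubs of natural subsets contained in it. -/
inductive Cl {α : Type u} [PartialOrder α] (conv : Set α → α → Prop) (A : Set α) : α → Prop
  | base {a : α} : a ∈ A → Cl conv A a
  | down {a b : α} : Cl conv A a → b ≤ a → Cl conv A b
  | nat {B : Set α} {b : α} : (∀ x ∈ B, Cl conv A x) → conv B b → Cl conv A b

/-- A subset is closed for the cl-rule system: downward closed and closed under
natural lubs of its natural subsets. -/
def IsClClosed {α : Type u} [PartialOrder α] (conv : Set α → α → Prop) (S : Set α) : Prop :=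
  (∀ a ∈ S, ∀ b : α, b ≤ a → b ∈ S) ∧
  ∀ B ⊆ S, ∀ b : α, conv B b → b ∈ S

lemma cl_minimal {α : Type u} [PartialOrder α] (conv : Set α → α → Prop) (A U : Set α)
    (hU : IsClClosed conv U) (hAU : A ⊆ U) : ∀ x, Cl conv A x → x ∈ U := by
  intro x hx
  induction hx with
  | base h => exact hAU h
  | down _ hle ih => exact hU.1 _ ih _ hle
  | nat _ hconv ih => exact hU.2 _ ih _ hconv

lemma cl_closed {α : Type u} [PartialOrder α] (conv : Set α → α → Prop) (A : Set α) :
    IsClClosed conv {x | Cl conv A x} :=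
  ⟨fun _ ha _ hle => Cl.down ha hle, fun _ hB _ hconv => Cl.nat hB hconv⟩

lemma down_closed {α : Type u} [PartialOrder α] (conv : Set α → α → Prop)
    (hlub : ∀ (A : Set α) (a : α), conv A a → IsLUB A a) (d : α) :
    IsClClosed conv {x | x ≤ d} := by
  refine ⟨fun a ha b hb => le_trans hb ha, fun B hB b hconv => ?_⟩
  exact (hlub B b hconv).2 hB

/-- The lub-completion: the closed subsets `D̂`, ordered by inclusion, form a
complete lattice where the lub of a family is the closure of its union; and
`in_D d = {x | x ≤ d}` is an order embedding of `D` into `D̂` mapping natural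
lubs to lubs: if `A → a` then `in_D a = cl_D A` is the lub of `in_D[A]` in `D̂`. -/
theorem stmt9 {α : Type u} [PartialOrder α] (conv : Set α → α → Prop)
    (hlub : ∀ (A : Set α) (a : α), conv A a → IsLUB A a) :
    -- (D̂, ⊆) is a complete lattice: every family of closed sets has a least
    -- upper bound among the closed sets, namely the closure of its union
    (∀ 𝒜 : Set (Set α), (∀ S ∈ 𝒜, IsClClosed conv S) →
      IsClClosed conv {x | Cl conv (⋃₀ 𝒜) x} ∧
      (∀ S ∈ 𝒜, S ⊆ {x | Cl conv (⋃₀ 𝒜) x}) ∧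
      (∀ U : Set α, IsClClosed conv U → (∀ S ∈ 𝒜, S ⊆ U) →
        {x | Cl conv (⋃₀ 𝒜) x} ⊆ U)) ∧
    -- in_D lands in D̂
    (∀ d : α, IsClClosed conv {x | x ≤ d}) ∧
    -- in_D is an order embedding
    (∀ d d' : α, ({x | x ≤ d} ⊆ {x | x ≤ d'}) ↔ d ≤ d') ∧
    -- in_D maps natural lubs to lubs in D̂, which are the closures
    (∀ (A : Set α) (a : α), conv A a →
      {x | x ≤ a} = {x | Cl conv A x} ∧
      (∀ x ∈ A, {y | y ≤ x} ⊆ {y | y ≤ a}) ∧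
      (∀ U : Set α, IsClClosed conv U → (∀ x ∈ A, {y | y ≤ x} ⊆ U) →
        {y | y ≤ a} ⊆ U)) := by
  refine ⟨?_, down_closed conv hlub, ?_, ?_⟩
  · intro 𝒜 _
    refine ⟨cl_closed conv _, ?_, ?_⟩
    · intro S hS x hx
      exact Cl.base ⟨S, hS, hx⟩
    · intro U hU hSU
      exact cl_minimal conv _ U hU (fun x ⟨S, hS, hx⟩ => hSU S hS hx) 
  · intro d d'
    constructor
    · intro h; exact h (le_refl d)
    · intro h x hx; exact le_trans hx h
  · intro A a hconv
    have hub : ∀ x ∈ A, x ≤ a := fun x hx => (hlub A a hconv).1 hx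
    have haCl : Cl conv A a := Cl.nat (fun x hx => Cl.base hx) hconv
    refine ⟨?_, fun x hx y hy => le_trans hy (hub x hx), ?_⟩
    · ext x
      constructor
      · intro hx; exact Cl.down haCl hx
      · intro hx
        exact cl_minimal conv A {y | y ≤ a} (down_closed conv hlub a) hub x hx
    · intro U hU h
      have hAU : A ⊆ U := fun x hx => h x hx (le_refl x)
      have : a ∈ U := cl_minimal conv A U hU hAU a haCl
      intro y hy
      exact hU.1 a this y hy
end

section
/- Let D be a partial order, P a set of subsets of |D| each having a lub, and A ⊆ |D| a subset with lub a. Then the lub-rule (D, P ↝ A) is valid (i.e., for every partial order E and every monotonic f : D → E that preserves the lubs of all members of P, f also preserves the lub of A) if and only if a ∈ cl_P(A), the closure of A under the cl-rule system of the lubpo (|D|, ≤, →^P) in which exactly the members of P are natural. -/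
universe u

/-- A lub-rule `(D, P ↝ A)` is valid (every monotone map into a partial order
preserving the lubs of all members of `P` also preserves the lub of `A`) iff
`lub A` lies in the closure `cl_P A` for the lubpo whose natural sets are
exactly the members of `P`. -/
theorem stmt10 {α : Type u} [PartialOrder α] (P : Set (Set α))
    (hP : ∀ B ∈ P, ∃ b : α, IsLUB B b)
    (A : Set α) (a : α) (ha : IsLUB A a) :
    (∀ (β : Type u) [PartialOrder β] (f : α → β), Monotone f →
        (∀ B ∈ P, ∀ b : α, IsLUB B b → IsLUB (f '' B) (f b)) →
        IsLUB (f '' A) (f a))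
    ↔ Cl (fun B b => B ∈ P ∧ IsLUB B b) A a := by
  constructor
  · intro h
    set conv : Set α → α → Prop := fun B b => B ∈ P ∧ IsLUB B b with hconv
    classical
    -- counterexample map into ULift Prop
    let f : α → ULift.{u} Prop := fun x => ULift.up (¬ Cl conv A x)
    have hmono : Monotone f := by
      intro x y hxy
      show (¬ Cl conv A x) → (¬ Cl conv A y)
      intro hx hy
      exact hx (Cl.down hy hxy)
    have hpres : ∀ B ∈ P, ∀ b : α, IsLUB B b → IsLUB (f '' B) (f b) := by
      intro B hB b hb
      constructor
      · rintro _ ⟨x, hx, rfl⟩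
        show (¬ Cl conv A x) → (¬ Cl conv A b)
        intro hx' hb'
        exact hx' (Cl.down hb' (hb.1 hx))
      · intro c hc
        show (¬ Cl conv A b) → c.down
        intro hnb
        by_cases hall : ∀ x ∈ B, Cl conv A x
        · exact absurd (Cl.nat hall ⟨hB, hb⟩) hnb
        · push_neg at hall
          obtain ⟨x, hx, hnx⟩ := hall
          exact hc ⟨x, hx, rfl⟩ hnx
    have hub : ULift.up False ∈ upperBounds (f '' A) := by
      rintro _ ⟨x, hx, rfl⟩
      show (¬ Cl conv A x) → False
      intro hx'
      exact hx' (Cl.base hx)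
    have := (h _ f hmono hpres).2 hub
    by_contra hna
    exact this hna
  · intro hcl β _ f hmono hpres
    constructor
    · rintro _ ⟨x, hx, rfl⟩
      exact hmono (ha.1 hx)
    · intro c hc
      have key : ∀ x, Cl (fun B b => B ∈ P ∧ IsLUB B b) A x → f x ≤ c := by
        intro x hx
        induction hx with
        | base h => exact hc ⟨_, h, rfl⟩
        | down _ hle ih => exact le_trans (hmono hle) ih
        | nat hB hconv ih =>
          exact (hpres _ hconv.1 _ hconv.2).2 (by rintro _ ⟨x, hx, rfl⟩; exact ih x hx)
      exact key a hcl
end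

section
/- Let R be a lub-rule system on a partial order D, i.e., a set of valid lub-rules (P ↝ A) on D. Then every derived rule P ↝ A of R (one for which there is a well-founded deduction of A from P using the rules of R) is itself a valid lub-rule: the lub of A lies in cl_P(A). -/
universe u

/-- Well-founded deductions in a lub-rule system: `Deduc R P A` holds iff there
is a deduction of `A` from the pattern `P` using the rules of `R`. -/
inductive Deduc {α : Type u} (R : Set (Set α) → Set α → Prop) (P : Set (Set α)) :
    Set α → Prop
  | base {A : Set α} : A ∈ P → Deduc R P A
  | rule {Q : Set (Set α)} {A : Set α} : (∀ B ∈ Q, Deduc R P B) → R Q A → Deduc R P A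

/-- Validity of a lub-rule `(P ↝ A)` on a partial order. -/
def ValidRule {α : Type u} [PartialOrder α] (P : Set (Set α)) (A : Set α) : Prop :=
  ∀ (β : Type u) [PartialOrder β] (f : α → β), Monotone f →
    (∀ B ∈ P, ∀ b : α, IsLUB B b → IsLUB (f '' B) (f b)) →
    ∀ a : α, IsLUB A a → IsLUB (f '' A) (f a)

/-- Transitivity of the closure operator. -/
lemma Cl.trans' {α : Type u} [PartialOrder α] {conv : Set α → α → Prop}
    {S T : Set α} (h : ∀ x ∈ T, Cl conv S x) {y : α}
    (hy : Cl conv T y) : Cl conv S y := by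
  induction hy with
  | base ha => exact h _ ha
  | down _ hle ih => exact Cl.down ih hle
  | nat _ hc ih => exact Cl.nat ih hc

/-- Derived rules are valid. -/
lemma deduc_valid {α : Type u} [PartialOrder α]
    (R : Set (Set α) → Set α → Prop)
    (hR : ∀ (Q : Set (Set α)) (A : Set α), R Q A →
      (∀ B ∈ Q, ∃ b : α, IsLUB B b) ∧ (∃ a : α, IsLUB A a) ∧ ValidRule Q A)
    (P : Set (Set α)) (A : Set α) (hder : Deduc R P A) : ValidRule P A := by
  induction hder with
  | base hA => intro β _ f hmono hf a ha; exact hf _ hA a ha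
  | rule hQ hRQA ih =>
    intro β _ f hmono hf a ha
    exact (hR _ _ hRQA).2.2 β f hmono (fun B hB b hb => ih B hB β f hmono hf b hb) a ha

/-- Every derived rule of a lub-rule system consisting of valid lub-rules is
itself valid: the lub of `A` lies in `cl_P A`. -/
theorem stmt11 {α : Type u} [PartialOrder α]
    (R : Set (Set α) → Set α → Prop)
    (hR : ∀ (Q : Set (Set α)) (A : Set α), R Q A →
      (∀ B ∈ Q, ∃ b : α, IsLUB B b) ∧ (∃ a : α, IsLUB A a) ∧ ValidRule Q A)
    (P : Set (Set α)) (hP : ∀ B ∈ P, ∃ b : α, IsLUB B b)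
    (A : Set α) (hder : Deduc R P A) (a : α) (ha : IsLUB A a) :
    Cl (fun B b => B ∈ P ∧ IsLUB B b) A a := by
  set conv : Set α → α → Prop := fun B b => B ∈ P ∧ IsLUB B b with hconv
  have hval : ValidRule P A := deduc_valid R hR P A hder
  -- the poset of Cl-closed sets
  let β : Type u := {S : Set α // ∀ x, Cl conv S x → x ∈ S}
  -- f x = closure of {x}
  let f : α → β := fun x =>
    ⟨{y | Cl conv {x} y}, fun z hz => Cl.trans' (fun w hw => hw) hz⟩
  have hfmem : ∀ x y : α, y ∈ (f x).1 ↔ Cl conv {x} y := fun _ _ => Iff.rfl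
  have hfmono : Monotone f := by
    intro x x' hxx' y hy
    exact Cl.trans' (fun w hw => by
      rw [Set.mem_singleton_iff] at hw
      exact Cl.down (Cl.base rfl) (hw ▸ hxx')) hy
  have hfP : ∀ B ∈ P, ∀ b : α, IsLUB B b → IsLUB (f '' B) (f b) := by
    intro B hB b hb
    constructor
    · rintro _ ⟨x, hx, rfl⟩ y hy
      exact Cl.trans' (fun w hw => by
        rw [Set.mem_singleton_iff] at hw
        exact Cl.down (Cl.base rfl) (hw ▸ hb.1 hx)) hy
    · intro U hU
      -- show (f b).1 ⊆ U.1
      have hxU : ∀ x ∈ B, x ∈ U.1 := fun x hx =>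
        hU (Set.mem_image_of_mem f hx) (Cl.base rfl)
      have hbU : b ∈ U.1 :=
        U.2 b (Cl.nat (fun x hx => Cl.base (hxU x hx)) ⟨hB, hb⟩)
      intro y hy
      exact U.2 y (Cl.trans' (fun w hw => by
        rw [Set.mem_singleton_iff] at hw
        exact hw ▸ Cl.base hbU) hy)
  have hlub : IsLUB (f '' A) (f a) := hval β f hfmono hfP a ha
  -- cl(A) as an element of β
  let clA : β := ⟨{y | Cl conv A y}, fun z hz => Cl.trans' (fun w hw => hw) hz⟩
  have hUB : clA ∈ upperBounds (f '' A) := by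
    rintro _ ⟨x, hx, rfl⟩ y hy
    exact Cl.trans' (fun w hw => by
      rw [Set.mem_singleton_iff] at hw
      exact hw ▸ Cl.base hx) hy
  have : (f a).1 ⊆ clA.1 := hlub.2 hUB
  exact this (Cl.base rfl)
end

section
/- A dlubpo D is a closed dlubpo (cdlubpo), i.e., satisfies axiom S9: for every directed A ⊆ |D| with lub a such that a ∈ cl_D(A) one has A → a — if and only if D fulfills every valid directed lub-rule ((|D|, ≤), P ↝ A) on its underlying partial order (i.e., whenever all members of P are natural in D and the rule is valid, then A is natural in D). -/
universe u

/-- A dlubpo is a cdlubpo (axiom S9: every directed `A` with lub `a ∈ cl_D A`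
is natural) iff it fulfills every valid directed lub-rule on its underlying
partial order. -/
theorem stmt12 {α : Type u} [PartialOrder α] (conv : Set α → α → Prop)
    (hdl : ∀ (A : Set α) (a : α), conv A a → Dir A ∧ IsLUB A a)
    (hsing : ∀ a : α, conv {a} a) :
    -- axiom S9 (closure)
    (∀ (A : Set α) (a : α), Dir A → IsLUB A a → Cl conv A a → conv A a)
    ↔
    -- D fulfills every valid directed lub-rule
    (∀ (P : Set (Set α)) (A : Set α) (a : α),
      (∀ B ∈ P, Dir B ∧ ∃ b : α, IsLUB B b) →
      Dir A → IsLUB A a →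
      -- validity of the lub-rule (P ↝ A)
      (∀ (β : Type u) [PartialOrder β] (f : α → β), Monotone f →
        (∀ B ∈ P, ∀ b : α, IsLUB B b → IsLUB (f '' B) (f b)) →
        IsLUB (f '' A) (f a)) →
      -- all members of P natural implies A natural
      (∀ B ∈ P, ∃ b : α, conv B b) → conv A a) := by
  constructor
  · -- S9 → fulfills every valid directed lub-rule
    intro hS9 P A a hP hA ha hvalid hnat
    -- use the valid rule with f : α → Set α, f x = {y | ¬ Cl conv A x}
    set f : α → Set α := fun x => {y : α | ¬ Cl conv A x} with hf
    have hmono : Monotone f := by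
      intro x y hxy z hz
      exact fun hc => hz (Cl.down hc hxy)
    have hpres : ∀ B ∈ P, ∀ b : α, IsLUB B b → IsLUB (f '' B) (f b) := by
      intro B hB b hb
      obtain ⟨b', hb'⟩ := hnat B hB
      have hlub' : IsLUB B b' := (hdl B b' hb').2
      have hbb : b = b' := hb.unique hlub'
      subst hbb
      constructor
      · rintro _ ⟨x, hxB, rfl⟩
        exact hmono (hb.1 hxB)
      · intro S hS y hy
        by_contra hyS
        have hall : ∀ x ∈ B, Cl conv A x := by
          intro x hx
          by_contra hcx
          exact hyS (hS ⟨x, hx, rfl⟩ hcx)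
        exact hy (Cl.nat hall hb')
    have hlubf := hvalid (Set.{u} α) f hmono hpres
    -- conclude Cl conv A a
    obtain ⟨a0, ha0⟩ := hA.1
    have hempty : (∅ : Set α) ∈ upperBounds (f '' A) := by
      rintro _ ⟨x, hx, rfl⟩ y hy
      exact absurd (Cl.base hx) hy
    have : f a ⊆ ∅ := hlubf.2 hempty
    have hcl : Cl conv A a := by
      by_contra hc
      exact (this (show a0 ∈ f a from hc)).elim
    exact hS9 A a hA ha hcl
  · -- fulfillment → S9
    intro hful A a hA ha hcl
    refine hful {B | ∃ b : α, conv B b} A a ?_ hA ha ?_ (fun B hB => hB)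
    · rintro B ⟨b, hb⟩
      exact ⟨(hdl B b hb).1, b, (hdl B b hb).2⟩
    · intro β _ f hmono hpres
      constructor
      · rintro _ ⟨x, hx, rfl⟩
        exact hmono (ha.1 hx)
      · intro u hu
        have key : ∀ c, Cl conv A c → f c ≤ u := by
          intro c hc
          induction hc with
          | base h => exact hu ⟨_, h, rfl⟩
          | down _ hle ih => exact (hmono hle).trans ih
          | nat hB hconv ih =>
            have hlubB := (hdl _ _ hconv).2
            have := hpres _ ⟨_, hconv⟩ _ hlubB
            exact this.2 (by rintro _ ⟨x, hx, rfl⟩; exact ih x hx)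
        exact key a hcl
end

section
/- Let D be a dlubpo, A ⊆ |D|, and a a finite element of D (i.e., for every directed natural B → b with a ≤ b there is b' ∈ B with a ≤ b'). If a ∈ cl_D(A), then there exists a' ∈ A with a ≤ a'. -/
universe u

/-- If `a` is a finite element of a dlubpo (every natural `B → b` with `a ≤ b`
contains an element above `a`) and `a ∈ cl_D A`, then some `a' ∈ A` lies above
`a`. -/
theorem stmt17 {α : Type u} [PartialOrder α] (conv : Set α → α → Prop)
    (hdl : ∀ (A : Set α) (a : α), conv A a → Dir A ∧ IsLUB A a)
    (hsing : ∀ a : α, conv {a} a)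
    (A : Set α) (a : α)
    (hfin : ∀ (B : Set α) (b : α), conv B b → a ≤ b → ∃ b' ∈ B, a ≤ b')
    (hcl : Cl conv A a) :
    ∃ a' ∈ A, a ≤ a' := by
  suffices h : ∀ c, Cl conv A c → a ≤ c → ∃ a' ∈ A, a ≤ a' from h a hcl le_rfl
  intro c hc
  induction hc with
  | base h => exact fun hle => ⟨_, h, hle⟩
  | down _ hba ih => exact fun hle => ih (hle.trans hba)
  | nat _ hconv ih =>
    intro hle
    obtain ⟨b', hb', hab'⟩ := hfin _ _ hconv hle
    exact ih _ hb' hab'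
end

section
/- Every finite-determined dlubpo is a closed dlubpo (cdlubpo). Consequently, every algebraic dlubpo satisfying axiom S6 (cofinality) for directed subsets is a cdlubpo. -/
universe u

/-- A finite element of a dlubpo. -/
def FiniteElt {α : Type u} [PartialOrder α] (conv : Set α → α → Prop) (a : α) : Prop :=
  ∀ (B : Set α) (b : α), conv B b → a ≤ b → ∃ b' ∈ B, a ≤ b'

/-- Axiom S9 (closure): the dlubpo is a cdlubpo. -/
def S9ax {α : Type u} [PartialOrder α] (conv : Set α → α → Prop) : Prop :=
  ∀ (A : Set α) (a : α), Dir A → IsLUB A a → Cl conv A a → conv A a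

theorem cl_aux {α : Type u} [PartialOrder α] (conv : Set α → α → Prop)
    (hdl : ∀ (A : Set α) (a : α), conv A a → Dir A ∧ IsLUB A a) (F : Set α)
    (hF : ∀ (A : Set α) (a : α), Dir A → IsLUB A a →
        (conv A a ↔ ∀ b ∈ F, b ≤ a → ∃ a' ∈ A, b ≤ a'))
    {A : Set α} {x : α} (hx : Cl conv A x) :
    ∀ b ∈ F, b ≤ x → ∃ a' ∈ A, b ≤ a' := by
  induction hx with
  | base h => exact fun b _ hbx => ⟨_, h, hbx⟩
  | down _ hxy ih => exact fun b hb hbx => ih b hb (hbx.trans hxy)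
  | nat hB hconv ih =>
    intro b hb hbx
    obtain ⟨hdir, hlub⟩ := hdl _ _ hconv
    obtain ⟨b', hb'B, hbb'⟩ := (hF _ _ hdir hlub).mp hconv b hb hbx
    exact ih _ hb'B b hb hbb'

/-- Every finite-determined dlubpo is a cdlubpo; consequently, every algebraic
dlubpo satisfying axiom S6 (cofinality) for directed subsets is a cdlubpo. -/
theorem stmt18 {α : Type u} [PartialOrder α] (conv : Set α → α → Prop)
    (hdl : ∀ (A : Set α) (a : α), conv A a → Dir A ∧ IsLUB A a)
    (hsing : ∀ a : α, conv {a} a) :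
    -- finite-determined → cdlubpo
    ((∃ F : Set α, ∀ (A : Set α) (a : α), Dir A → IsLUB A a →
        (conv A a ↔ ∀ b ∈ F, b ≤ a → ∃ a' ∈ A, b ≤ a')) → S9ax conv) ∧
    -- algebraic + S6 (cofinality) for directed sets → cdlubpo
    ((∀ d : α, conv {a : α | FiniteElt conv a ∧ a ≤ d} d) →
      (∀ (X Y : Set α) (x : α), Dir X → Dir Y → conv X x →
        (∀ a ∈ X, ∃ b ∈ Y, a ≤ b) → (∀ y ∈ Y, y ≤ x) → conv Y x) →
      S9ax conv) := by
  refine ⟨?_, ?_⟩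
  · rintro ⟨F, hF⟩ A a hA hlub hcl
    exact (hF A a hA hlub).mpr (cl_aux conv hdl F hF hcl)
  · intro halg hS6 A a hA hlub hcl
    have hF : ∀ (B : Set α) (b : α), Dir B → IsLUB B b →
        (conv B b ↔ ∀ c ∈ {x | FiniteElt conv x}, c ≤ b → ∃ b' ∈ B, c ≤ b') := by
      intro B b hB hlubB
      constructor
      · exact fun hc c hcfin hcb => hcfin B b hc hcb
      · intro h
        have hx := halg b
        obtain ⟨hdirX, _⟩ := hdl _ _ hx
        refine hS6 _ B b hdirX hB hx ?_ (fun y hy => hlubB.1 hy)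
        rintro x ⟨hxfin, hxb⟩
        exact h x hxfin hxb
    exact (hF A a hA hlub).mpr (cl_aux conv hdl _ hF hcl)
end

section
/- A dlubpo D is a closed dlubpo (cdlubpo) if and only if it is realized by a restricted partial order. In particular: (1) if a restricted partial order E realizes D via an order isomorphism φ : |D| → |E| such that for all directed A with lub a, A → a in D iff φ(a) = lub(φ[A]) in the ambient order of E, then D satisfies axiom S9; and (2) every cdlubpo D is realized by the restricted partial order (in[|D|], D̂, ⊆) via the embedding in(d) = {x : x ≤ d}, where D̂ is the complete lattice of cl_D-closed subsets of |D| ordered by inclusion. -/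
universe u

/-- A restricted partial order `(props ⊆ ρ, ≤)` realizes the dlubpo via
`φ`: `φ` is an order isomorphism onto the set of proper elements, and a
directed set with a lub is natural iff `φ` sends its lub to the lub of its
image in the ambient order of the realizers. -/
def RealizedBy {α : Type u} [PartialOrder α] (conv : Set α → α → Prop)
    (ρ : Type u) [PartialOrder ρ] (props : Set ρ) (φ : α → ρ) : Prop :=
  (∀ x y : α, φ x ≤ φ y ↔ x ≤ y) ∧
  Set.range φ = props ∧
  ∀ (A : Set α) (a : α), Dir A → IsLUB A a →
    (conv A a ↔ IsLUB (φ '' A) (φ a))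

/-- A dlubpo is a cdlubpo (axiom S9) iff it is realized by a restricted partial
order; in particular every cdlubpo is realized by the restricted partial order
of cl-closed subsets `D̂` (a complete lattice ordered by inclusion) via the
embedding `in d = {x | x ≤ d}`. -/
theorem stmt19 {α : Type u} [PartialOrder α] (conv : Set α → α → Prop)
    (hdl : ∀ (A : Set α) (a : α), conv A a → Dir A ∧ IsLUB A a)
    (hsing : ∀ a : α, conv {a} a) :
    -- realized by some rpo ↔ cdlubpo
    (S9ax conv ↔
      ∃ (ρ : Type u) (inst : PartialOrder ρ) (props : Set ρ) (φ : α → ρ),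
        @RealizedBy α _ conv ρ inst props φ) ∧
    -- every cdlubpo is realized by (in[|D|], D̂, ⊆) via in
    (S9ax conv →
      ∃ h : ∀ d : α, IsClClosed conv {x : α | x ≤ d},
        RealizedBy conv {S : Set α // IsClClosed conv S}
          (Set.range fun d : α =>
            (⟨{x : α | x ≤ d}, h d⟩ : {S : Set α // IsClClosed conv S}))
          (fun d : α => ⟨{x : α | x ≤ d}, h d⟩)) := by
  have hclosed : ∀ d : α, IsClClosed conv {x : α | x ≤ d} := fun d =>
    ⟨fun a ha b hb => le_trans hb ha,
     fun B hB b hconv => (hdl B b hconv).2.2 (fun _ hx => hB hx)⟩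
  have main : S9ax conv → RealizedBy conv {S : Set α // IsClClosed conv S}
      (Set.range fun d : α =>
        (⟨{x : α | x ≤ d}, hclosed d⟩ : {S : Set α // IsClClosed conv S}))
      (fun d : α => ⟨{x : α | x ≤ d}, hclosed d⟩) := by
    intro hS9
    refine ⟨?_, rfl, ?_⟩
    · intro x y
      constructor
      · intro h
        exact h (le_refl x)
      · intro h z hz
        exact le_trans hz h
    · intro A a hdir hlub
      constructor
      · intro hconv
        constructor
        · rintro _ ⟨d, hd, rfl⟩ z hz
          exact le_trans hz (hlub.1 hd)
        · rintro ⟨S, hSc⟩ hub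
          have hAS : A ⊆ S := by
            intro d hd
            exact hub ⟨d, hd, rfl⟩ (le_refl d)
          have haS : a ∈ S := hSc.2 A hAS a hconv
          intro z hz
          exact hSc.1 a haS z hz
      · intro hlub'
        refine hS9 A a hdir hlub ?_
        have hScl : IsClClosed conv {x | Cl conv A x} :=
          ⟨fun p hp b hb => Cl.down hp hb, fun B hB b hc => Cl.nat (fun x hx => hB hx) hc⟩
        have hub : (⟨{x | Cl conv A x}, hScl⟩ : {S : Set α // IsClClosed conv S}) ∈
            upperBounds ((fun d : α =>
              (⟨{x : α | x ≤ d}, hclosed d⟩ : {S : Set α // IsClClosed conv S})) '' A) := by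
          rintro _ ⟨d, hd, rfl⟩ z hz
          exact Cl.down (Cl.base hd) hz
        exact hlub'.2 hub (le_refl a)
  constructor
  · constructor
    · intro h9
      exact ⟨_, _, _, _, main h9⟩
    · rintro ⟨ρ, inst, props, φ, hmono, hrange, hreal⟩
      intro A a hdir hlub hcl
      rw [hreal A a hdir hlub]
      constructor
      · rintro _ ⟨x, hx, rfl⟩
        exact (hmono x a).2 (hlub.1 hx)
      · intro s hs
        have key : ∀ c, Cl conv A c → φ c ≤ s := by
          intro c hc
          induction hc with
          | base h => exact hs ⟨_, h, rfl⟩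
          | down h hle ih => exact le_trans ((hmono _ _).2 hle) ih
          | nat hB hc ih =>
            obtain ⟨hdB, hlB⟩ := hdl _ _ hc
            refine ((hreal _ _ hdB hlB).1 hc).2 ?_
            rintro _ ⟨x, hx, rfl⟩
            exact ih x hx
        exact key a hcl
  · intro h9
    exact ⟨hclosed, main h9⟩
end
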